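/- Let S_X : [−π, π] → ℝ be integrable, nonnegative and even, and let g : [−π, π] → ℝ be continuous, nonnegative and even with g(−π) = g(π). Set S_Y = g·S_X, and suppose M_{S_Y}(n) > 0 for all n ≥ 1 and that there exists L > 0 with M_{S_X}(n)/M_{S_Y}(n) ≤ L for all n ≥ 1. Then for every ε > 0 there exist q ≥ 0 and real numbers ρ_0, …, ρ_q such that, setting S⋆(ω) = |Σ_{j=0}^q ρ_j e^{−ijω}|² · S_X(ω), one has |M_{S⋆}(n)/M_{S_Y}(n) − 1| < ε for every n ≥ 1. -/

import Mathlib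

open MeasureTheory Real Filter Finset

/-- The `n`-th Fejér kernel `F_n(ω) = Σ_{j=-(n-1)}^{n-1} (1 - |j|/n) e^{-ijω}`,
written in its (equal) real form via cosines. -/
noncomputable def fejerKernel (n : ℕ) (ω : ℝ) : ℝ :=
  ∑ j ∈ Finset.Icc (-(n : ℤ) + 1) ((n : ℤ) - 1), (1 - |(j : ℝ)| / n) * Real.cos (j * ω)

/-- The generalized mean squared displacement `M_S(n) = n ∫_{-π}^{π} F_n(ω) S(ω) dω`. -/
noncomputable def gmsd (S : ℝ → ℝ) (n : ℕ) : ℝ :=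
  n * ∫ ω in (-π)..π, fejerKernel n ω * S ω

/-- symmetric Icc sum decomposition -/
lemma sum_Icc_symm (f : ℤ → ℝ) (n : ℕ) :
    ∑ j ∈ Finset.Icc (-(n : ℤ)) n, f j
      = f 0 + ∑ k ∈ Finset.range n, (f (k + 1) + f (-(k + 1))) := by
  induction n with
  | zero => simp
  | succ n ih =>
    have h1 : Finset.Icc (-((n:ℤ)+1)) ((n:ℤ)+1)
        = insert (-((n:ℤ)+1)) (insert ((n:ℤ)+1) (Finset.Icc (-(n:ℤ)) n)) := by
      ext j
      simp only [Finset.mem_Icc, Finset.mem_insert]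
      omega
    have h2 : ((n:ℤ)+1) ∉ Finset.Icc (-(n:ℤ)) n := by simp only [Finset.mem_Icc, Finset.mem_insert]; omega
    have h3 : (-((n:ℤ)+1)) ∉ insert ((n:ℤ)+1) (Finset.Icc (-(n:ℤ)) n) := by
      simp only [Finset.mem_Icc, Finset.mem_insert]; omega
    push_cast
    rw [h1, Finset.sum_insert h3, Finset.sum_insert h2, ih, Finset.sum_range_succ]
    push_cast
    ring

lemma fejer_eq_normSq (n : ℕ) (ω : ℝ) :
    ∑ j ∈ Finset.Icc (-(n : ℤ) + 1) ((n : ℤ) - 1), ((n : ℝ) - |(j : ℝ)|) * Real.cos (j * ω)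
      = Complex.normSq (∑ k ∈ Finset.range n, Complex.exp ((k * ω : ℝ) * Complex.I)) := by
  induction n with
  | zero => simp
  | succ n ih =>
    -- LHS manipulation
    have hIcc : Finset.Icc (-((n+1 : ℕ) : ℤ) + 1) (((n+1 : ℕ) : ℤ) - 1)
        = Finset.Icc (-(n:ℤ)) (n:ℤ) := by congr 1 <;> push_cast <;> ring
    have hzero : ∑ j ∈ Finset.Icc (-(n:ℤ)) (n:ℤ), ((n : ℝ) - |(j : ℝ)|) * Real.cos (j * ω)
        = ∑ j ∈ Finset.Icc (-(n:ℤ) + 1) ((n:ℤ) - 1), ((n : ℝ) - |(j : ℝ)|) * Real.cos (j * ω) := by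
      refine (Finset.sum_subset ?_ ?_).symm
      · intro j hj; simp only [Finset.mem_Icc] at hj ⊢; omega
      · intro j hj hj'
        simp only [Finset.mem_Icc] at hj hj'
        have : |(j:ℝ)| = (n:ℝ) := by
          rw [← Int.cast_abs]
          have : |j| = (n:ℤ) := by rw [Int.abs_eq_natAbs]; omega
          rw [this]; simp
        rw [this]; ring
    have hL : ∑ j ∈ Finset.Icc (-((n+1 : ℕ) : ℤ) + 1) (((n+1 : ℕ) : ℤ) - 1),
          (((n+1 : ℕ) : ℝ) - |(j : ℝ)|) * Real.cos (j * ω)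
        = (∑ j ∈ Finset.Icc (-(n:ℤ) + 1) ((n:ℤ) - 1), ((n : ℝ) - |(j : ℝ)|) * Real.cos (j * ω))
          + ∑ j ∈ Finset.Icc (-(n:ℤ)) (n:ℤ), Real.cos (j * ω) := by
      rw [hIcc, ← hzero, ← Finset.sum_add_distrib]
      refine Finset.sum_congr rfl fun j hj => by push_cast; ring
    have hnormsq : Complex.normSq (Complex.exp (((n : ℝ) * ω : ℝ) * Complex.I)) = 1 := by
      rw [Complex.normSq_eq_norm_sq, Complex.norm_exp]
      simp
    have hre : ((∑ k ∈ Finset.range n, Complex.exp ((k * ω : ℝ) * Complex.I)) *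
        (starRingEnd ℂ) (Complex.exp (((n : ℝ) * ω : ℝ) * Complex.I))).re
        = ∑ k ∈ Finset.range n, Real.cos (((k:ℝ) - n) * ω) := by
      rw [← Complex.exp_conj, Finset.sum_mul, Complex.re_sum]
      refine Finset.sum_congr rfl fun k hk => ?_
      rw [← Complex.exp_add]
      have harg : ((k * ω : ℝ) : ℂ) * Complex.I + (starRingEnd ℂ) (((n : ℝ) * ω : ℝ) * Complex.I)
          = ((((k:ℝ) - n) * ω : ℝ) : ℂ) * Complex.I := by
        rw [map_mul, Complex.conj_I, Complex.conj_ofReal]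
        push_cast
        ring
      rw [harg, Complex.exp_ofReal_mul_I_re]
    have hdir : ∑ j ∈ Finset.Icc (-(n:ℤ)) (n:ℤ), Real.cos (j * ω)
        = 1 + 2 * ∑ k ∈ Finset.range n, Real.cos (((k:ℝ) - n) * ω) := by
      rw [sum_Icc_symm (fun j : ℤ => Real.cos ((j : ℝ) * ω)) n]
      have hrefl : ∑ k ∈ Finset.range n, Real.cos (((k:ℝ) - n) * ω)
          = ∑ k ∈ Finset.range n, Real.cos (((k:ℝ) + 1) * ω) := by
        rw [← Finset.sum_range_reflect]
        refine Finset.sum_congr rfl fun k hk => ?_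
        rw [Finset.mem_range] at hk
        have h1 : ((n - 1 - k : ℕ) : ℝ) = (n : ℝ) - 1 - k := by
          rw [Nat.cast_sub (by omega), Nat.cast_sub (by omega)]
          push_cast; ring
        rw [h1, show ((n:ℝ) - 1 - k - n) * ω = -(((k:ℝ) + 1) * ω) by ring, Real.cos_neg]
      rw [hrefl]
      push_cast
      simp only [neg_mul, Real.cos_neg, zero_mul, Real.cos_zero]
      rw [Finset.mul_sum]
      congr 1
      exact Finset.sum_congr rfl fun k _ => by ring
    rw [Finset.sum_range_succ, Complex.normSq_add, hL, ih, hnormsq, hre, hdir]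
    ring


lemma fejerKernel_nonneg (n : ℕ) (ω : ℝ) : 0 ≤ fejerKernel n ω := by
  rcases Nat.eq_zero_or_pos n with h | h
  · subst h
    unfold fejerKernel
    rw [Finset.Icc_eq_empty (by norm_num)]
    simp
  · have hne : (n:ℝ) ≠ 0 := Nat.cast_ne_zero.mpr (by omega)
    have heq : fejerKernel n ω
        = (∑ j ∈ Finset.Icc (-(n:ℤ)+1) ((n:ℤ)-1), ((n:ℝ) - |(j:ℝ)|) * Real.cos (j * ω)) / n := by
      unfold fejerKernel
      rw [Finset.sum_div]
      refine Finset.sum_congr rfl fun j _ => ?_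
      field_simp
    rw [heq, fejer_eq_normSq]
    exact div_nonneg (Complex.normSq_nonneg _) (by positivity)

lemma fejerKernel_continuous (n : ℕ) : Continuous (fejerKernel n) := by
  unfold fejerKernel
  exact continuous_finset_sum _ fun j _ => by fun_prop

lemma sum_range_shift (N : ℕ) (f : ℤ → ℂ) :
    ∑ k ∈ Finset.range (2*N+1), f ((k:ℤ) - N) = ∑ j ∈ Finset.Icc (-(N:ℤ)) N, f j := by
  refine Finset.sum_nbij' (fun k => (k:ℤ) - N) (fun j => (j + N).toNat) ?_ ?_ ?_ ?_ ?_ <;>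
    (intro a ha; simp only [Finset.mem_range, Finset.mem_Icc] at *) <;> omega

lemma sum_Icc_neg (N : ℕ) (f : ℤ → ℂ) :
    ∑ j ∈ Finset.Icc (-(N:ℤ)) N, f (-j) = ∑ j ∈ Finset.Icc (-(N:ℤ)) N, f j := by
  refine Finset.sum_nbij' (fun j => -j) (fun j => -j) ?_ ?_ ?_ ?_ ?_ <;>
    (intro a ha; simp only [Finset.mem_Icc] at *) <;> omega

lemma exp_add_exp_neg (x : ℝ) :
    Complex.exp ((x:ℂ) * Complex.I) + Complex.exp (-(x:ℂ) * Complex.I)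
      = ((2 * Real.cos x : ℝ) : ℂ) := by
  rw [Complex.exp_mul_I, Complex.exp_mul_I, Complex.cos_neg, Complex.sin_neg,
    ← Complex.ofReal_cos]
  push_cast
  ring

lemma trig_approx (h : ℝ → ℝ) (hc : ContinuousOn h (Set.Icc (-π) π))
    (hper : h (-π) = h π) (heven : ∀ ω, h (-ω) = h ω)
    (δ : ℝ) (hδ : 0 < δ) :
    ∃ (N : ℕ) (ρ : ℕ → ℝ) (p : ℝ → ℝ),
      (∀ ω : ℝ, ∑ k ∈ Finset.range (2*N+1), (ρ k : ℂ) * Complex.exp (-Complex.I * k * ω)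
          = Complex.exp (-Complex.I * N * ω) * (p ω : ℂ)) ∧
      (∀ ω ∈ Set.Icc (-π) π, |p ω - h ω| ≤ δ) ∧ Continuous p := by
  haveI : Fact (0 < 2 * π) := ⟨by positivity⟩
  -- the lift of h to the circle
  have hendpoint : h (-π) = h (-π + 2 * π) := by rw [show -π + 2*π = π by ring]; exact hper
  have hcont' : ContinuousOn h (Set.Icc (-π) (-π + 2 * π)) := by
    rw [show -π + 2*π = π by ring]; exact hc
  set H : C(AddCircle (2 * π), ℝ) :=
    ⟨AddCircle.liftIco (2*π) (-π) h, AddCircle.liftIco_continuous hendpoint hcont'⟩ with hH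
  have hIcoMem : ∀ ω : ℝ, -π ≤ ω → ω < π → ω ∈ Set.Ico (-π) (-π + 2*π) := by
    intro ω h1 h2
    exact ⟨h1, by linarith⟩
  have hHIco : ∀ ω : ℝ, -π ≤ ω → ω < π → H ((ω : ℝ) : AddCircle (2*π)) = h ω := by
    intro ω h1 h2
    exact AddCircle.liftIco_coe_apply (hIcoMem ω h1 h2)
  have hHcoe : ∀ ω ∈ Set.Icc (-π) π, H ((ω : ℝ) : AddCircle (2*π)) = h ω := by
    intro ω hω
    rcases eq_or_lt_of_le hω.2 with heq | hlt
    · rw [heq]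
      have hcoe : ((π : ℝ) : AddCircle (2*π)) = ((-π : ℝ) : AddCircle (2*π)) := by
        have h0 := AddCircle.coe_add_period (2*π) (-π)
        rw [show -π + 2*π = π by ring] at h0
        exact h0
      rw [hcoe, hHIco (-π) le_rfl (by linarith [Real.pi_pos]), hper]
    · exact hHIco ω hω.1 hlt
  -- approximate in C(AddCircle, ℂ)
  set Hc : C(AddCircle (2 * π), ℂ) :=
    ⟨fun x => ((H x : ℝ) : ℂ), Complex.continuous_ofReal.comp H.continuous⟩ with hHc
  have hmem : Hc ∈ closure ((Submodule.span ℂ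
      (Set.range (@fourier (2*π)))) : Set C(AddCircle (2*π), ℂ)) := by
    rw [← Submodule.topologicalClosure_coe, span_fourier_closure_eq_top]
    trivial
  obtain ⟨P, hPmem, hPdist⟩ := Metric.mem_closure_iff.mp hmem δ hδ
  obtain ⟨c, hc⟩ := Finsupp.mem_span_range_iff_exists_finsupp.mp hPmem
  set N : ℕ := c.support.sup fun j => j.natAbs with hN
  have hsupp : ∀ j ∈ c.support, j ∈ Finset.Icc (-(N:ℤ)) N := by
    intro j hj
    have h5 : j.natAbs ≤ N := Finset.le_sup (f := fun j : ℤ => j.natAbs) hj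
    simp only [Finset.mem_Icc]
    omega
  set a : ℤ → ℝ := fun j => (c j).re with ha
  set p : ℝ → ℝ := fun ω => ∑ j ∈ Finset.Icc (-(N:ℤ)) N, a j * Real.cos (j * ω) with hp
  set ρ : ℕ → ℝ := fun k => (a ((k:ℤ) - N) + a ((N:ℤ) - (k:ℤ)))/2 with hρ
  have evalP : ∀ ψ : ℝ, P ((ψ : ℝ) : AddCircle (2*π))
      = ∑ i ∈ c.support, c i * Complex.exp ((i:ℂ) * ψ * Complex.I) := by
    intro ψ
    rw [← hc]
    rw [Finsupp.sum]
    rw [ContinuousMap.sum_apply]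
    refine Finset.sum_congr rfl fun i hi => ?_
    rw [ContinuousMap.smul_apply, fourier_coe_apply]
    rw [smul_eq_mul]
    congr 1
    congr 1
    have hTne : ((2 * π : ℝ) : ℂ) ≠ 0 := by
      simp [Real.pi_ne_zero]
    rw [div_eq_iff hTne]
    push_cast
    ring
  refine ⟨N, ρ, p, ?_, ?_, by rw [hp]; exact continuous_finset_sum _ fun j _ => by fun_prop⟩
  · intro ω
    have hsplit : ∀ k ∈ Finset.range (2*N+1),
        (ρ k : ℂ) * Complex.exp (-Complex.I * k * ω)
        = ((a ((k:ℤ) - N) : ℂ)/2) * Complex.exp (-Complex.I * k * ω)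
          + ((a ((N:ℤ) - (k:ℤ)) : ℂ)/2) * Complex.exp (-Complex.I * k * ω) := by
      intro k _
      rw [hρ]
      push_cast
      ring
    rw [Finset.sum_congr rfl hsplit, Finset.sum_add_distrib]
    have h1 : ∑ k ∈ Finset.range (2*N+1),
          ((a ((k:ℤ) - N) : ℂ)/2) * Complex.exp (-Complex.I * k * ω)
        = ∑ j ∈ Finset.Icc (-(N:ℤ)) N,
          ((a j : ℂ)/2) * Complex.exp (-Complex.I * ((j:ℂ) + N) * ω) := by
      rw [← sum_range_shift N
        (fun j => ((a j : ℂ)/2) * Complex.exp (-Complex.I * ((j:ℂ) + N) * ω))]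
      refine Finset.sum_congr rfl fun k hk => ?_
      congr 1
      congr 1
      push_cast
      ring
    have h2 : ∑ k ∈ Finset.range (2*N+1),
          ((a ((N:ℤ) - (k:ℤ)) : ℂ)/2) * Complex.exp (-Complex.I * k * ω)
        = ∑ j ∈ Finset.Icc (-(N:ℤ)) N,
          ((a j : ℂ)/2) * Complex.exp (-Complex.I * ((N:ℂ) - j) * ω) := by
      rw [← sum_Icc_neg N
        (fun j => ((a j : ℂ)/2) * Complex.exp (-Complex.I * ((N:ℂ) - j) * ω))]
      rw [← sum_range_shift N
        (fun m => ((a (-m) : ℂ)/2) * Complex.exp (-Complex.I * ((N:ℂ) - (-m : ℤ)) * ω))]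
      refine Finset.sum_congr rfl fun k hk => ?_
      rw [neg_sub]
      congr 1
      congr 1
      push_cast
      ring
    rw [h1, h2, ← Finset.sum_add_distrib, hp]
    push_cast
    rw [Finset.mul_sum]
    refine Finset.sum_congr rfl fun j hj => ?_
    have hx := exp_add_exp_neg ((j:ℝ) * ω)
    have e1 : Complex.exp (-Complex.I * ((j:ℂ) + N) * ω)
        = Complex.exp (-Complex.I * (N:ℂ) * ω)
          * Complex.exp (-((((j:ℝ) * ω : ℝ)):ℂ) * Complex.I) := by
      rw [← Complex.exp_add]
      congr 1
      push_cast
      ring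
    have e2 : Complex.exp (-Complex.I * ((N:ℂ) - j) * ω)
        = Complex.exp (-Complex.I * (N:ℂ) * ω)
          * Complex.exp (((((j:ℝ) * ω : ℝ)):ℂ) * Complex.I) := by
      rw [← Complex.exp_add]
      congr 1
      push_cast
      ring
    rw [e1, e2]
    push_cast at hx ⊢
    linear_combination (Complex.exp (-Complex.I * (N:ℂ) * ω) * (a j : ℂ) / 2) * hx
  · intro ω hω
    have hωneg : -ω ∈ Set.Icc (-π) π := ⟨by linarith [hω.2], by linarith [hω.1]⟩
    have hre : ∀ ψ, ψ ∈ Set.Icc (-π) π →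
        |(P ((ψ : ℝ) : AddCircle (2*π))).re - h ψ| ≤ δ := by
      intro ψ hψ
      have h1 : dist (Hc ((ψ : ℝ) : AddCircle (2*π))) (P ((ψ : ℝ) : AddCircle (2*π)))
          ≤ dist Hc P := ContinuousMap.dist_apply_le_dist _
      have h3 : ‖P ((ψ : ℝ) : AddCircle (2*π)) - Hc ((ψ : ℝ) : AddCircle (2*π))‖ ≤ δ := by
        rw [← Complex.dist_eq, dist_comm]
        exact le_of_lt (lt_of_le_of_lt h1 hPdist)
      have h4 : (Hc ((ψ : ℝ) : AddCircle (2*π))).re = h ψ := by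
        rw [hHc]
        simp only [ContinuousMap.coe_mk, Complex.ofReal_re]
        exact hHcoe ψ hψ
      calc |(P ((ψ : ℝ) : AddCircle (2*π))).re - h ψ|
          = |(P ((ψ : ℝ) : AddCircle (2*π)) - Hc ((ψ : ℝ) : AddCircle (2*π))).re| := by
            rw [Complex.sub_re, h4]
        _ ≤ ‖P ((ψ : ℝ) : AddCircle (2*π)) - Hc ((ψ : ℝ) : AddCircle (2*π))‖ :=
            Complex.abs_re_le_norm _
        _ ≤ δ := h3
    have hsum2 : (P ((ω : ℝ) : AddCircle (2*π))).re + (P ((-ω : ℝ) : AddCircle (2*π))).re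
        = 2 * ∑ i ∈ c.support, a i * Real.cos (i * ω) := by
      rw [evalP ω, evalP (-ω), Complex.re_sum, Complex.re_sum, ← Finset.sum_add_distrib,
        Finset.mul_sum]
      refine Finset.sum_congr rfl fun i hi => ?_
      have hx := exp_add_exp_neg ((i:ℝ) * ω)
      have e1 : Complex.exp ((i:ℂ) * ω * Complex.I)
          = Complex.exp ((((i:ℝ) * ω : ℝ) : ℂ) * Complex.I) := by
        congr 1
        push_cast
        ring
      have e2 : Complex.exp ((i:ℂ) * ((-ω : ℝ) : ℂ) * Complex.I)
          = Complex.exp (-(((i:ℝ) * ω : ℝ) : ℂ) * Complex.I) := by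
        congr 1
        push_cast
        ring
      rw [e1, e2, ← Complex.add_re, ← mul_add, hx]
      simp only [Complex.mul_re, Complex.ofReal_re, Complex.ofReal_im, mul_zero, sub_zero]
      rw [ha]
      ring
    have hps : p ω = ((P ((ω : ℝ) : AddCircle (2*π))).re
        + (P ((-ω : ℝ) : AddCircle (2*π))).re)/2 := by
      rw [hsum2, hp]
      rw [Finset.sum_subset hsupp]
      · field_simp
        exact Finset.sum_congr rfl fun x _ => by rw [mul_comm ω]
      · intro j hj hj'
        have : c j = 0 := Finsupp.notMem_support_iff.mp hj'
        rw [ha]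
        simp [this]
    have hAB := hre ω hω
    have hAB' := hre (-ω) hωneg
    rw [heven ω] at hAB'
    rw [hps]
    rw [abs_le] at hAB hAB' ⊢
    constructor <;> [linarith [hAB.1, hAB'.1]; linarith [hAB.2, hAB'.2]]

theorem ma_approximation_of_high_frequency_noise
    (SX g : ℝ → ℝ)
    (hSXint : IntegrableOn SX (Set.Icc (-π) π))
    (hSXnonneg : ∀ ω, 0 ≤ SX ω)
    (hSXeven : ∀ ω, SX (-ω) = SX ω)
    (hgcont : ContinuousOn g (Set.Icc (-π) π))
    (hgnonneg : ∀ ω, 0 ≤ g ω)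
    (hgeven : ∀ ω, g (-ω) = g ω)
    (hgper : g (-π) = g π)
    (SY : ℝ → ℝ) (hSY : ∀ ω, SY ω = g ω * SX ω)
    (hSYpos : ∀ n : ℕ, 1 ≤ n → 0 < gmsd SY n)
    (L : ℝ) (hL : 0 < L)
    (hbound : ∀ n : ℕ, 1 ≤ n → gmsd SX n / gmsd SY n ≤ L) :
    ∀ ε > (0 : ℝ), ∃ (q : ℕ) (ρ : ℕ → ℝ),
      ∀ n : ℕ, 1 ≤ n →
        |gmsd (fun ω => ‖∑ j ∈ Finset.range (q + 1),
            (ρ j : ℂ) * Complex.exp (-Complex.I * j * ω)‖ ^ 2 * SX ω) n /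
          gmsd SY n - 1| < ε := by
  intro ε hε
  have hππ : -π ≤ π := by linarith [Real.pi_pos]
  set h : ℝ → ℝ := fun ω => Real.sqrt (g ω) with hh
  have hhc : ContinuousOn h (Set.Icc (-π) π) :=
    Real.continuous_sqrt.comp_continuousOn hgcont
  have hhper : h (-π) = h π := by rw [hh]; simp only []; rw [hgper]
  have hheven : ∀ ω, h (-ω) = h ω := fun ω => by
    rw [hh]; simp only []; rw [hgeven ω]
  obtain ⟨C, hC⟩ := isCompact_Icc.exists_bound_of_continuousOn hhc
  have hC0 : 0 ≤ C := le_trans (norm_nonneg _) (hC (-π) ⟨le_refl _, hππ⟩)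
  set δ : ℝ := ε / (2 * L) with hδdef
  have hδpos : 0 < δ := by positivity
  set δ' : ℝ := min 1 (δ / (1 + 2 * C)) with hδ'def
  have hδ'pos : 0 < δ' := lt_min one_pos (by positivity)
  obtain ⟨N, ρ, p, hident, happrox, hpcont⟩ := trig_approx h hhc hhper hheven δ' hδ'pos
  refine ⟨2 * N, ρ, ?_⟩
  intro n hn
  have hBpos := hSYpos n hn
  -- pointwise estimate
  have hest : ∀ ω ∈ Set.Icc (-π) π, |p ω ^ 2 - g ω| ≤ δ := by
    intro ω hω
    have h1 := happrox ω hω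
    have h2 : h ω ^ 2 = g ω := Real.sq_sqrt (hgnonneg ω)
    have h3 : |h ω| ≤ C := by
      have := hC ω hω
      rwa [Real.norm_eq_abs] at this
    have hfact : p ω ^ 2 - g ω = (p ω - h ω) * (p ω + h ω) := by
      rw [← h2]; ring
    have h4 : |p ω + h ω| ≤ δ' + 2 * C := by
      have : p ω + h ω = (p ω - h ω) + 2 * h ω := by ring
      rw [this]
      refine le_trans (abs_add_le _ _) ?_
      have : |2 * h ω| ≤ 2 * C := by rw [abs_mul]; simp; linarith [h3]
      linarith [h1, this]
    calc |p ω ^ 2 - g ω| = |p ω - h ω| * |p ω + h ω| := by rw [hfact, abs_mul]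
      _ ≤ δ' * (δ' + 2 * C) :=
          mul_le_mul h1 h4 (abs_nonneg _) (le_of_lt hδ'pos)
      _ ≤ δ' * (1 + 2 * C) := by
          have : δ' ≤ 1 := min_le_left _ _
          nlinarith [hδ'pos.le]
      _ ≤ (δ / (1 + 2 * C)) * (1 + 2 * C) := by
          have h5 : δ' ≤ δ / (1 + 2 * C) := min_le_right _ _
          have h6 : (0:ℝ) < 1 + 2 * C := by linarith
          nlinarith
      _ = δ := by field_simp
  -- rewrite of the modulus squared
  have habs : ∀ ω : ℝ, ‖∑ j ∈ Finset.range (2 * N + 1),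
      (ρ j : ℂ) * Complex.exp (-Complex.I * j * ω)‖ ^ 2 = p ω ^ 2 := by
    intro ω
    rw [hident ω, norm_mul, Complex.norm_exp, Complex.norm_real, Real.norm_eq_abs]
    have : (-Complex.I * (N:ℂ) * (ω:ℂ)).re = 0 := by simp
    rw [this, Real.exp_zero, one_mul, sq_abs]
  have hfun : (fun ω : ℝ => ‖∑ j ∈ Finset.range (2 * N + 1),
        (ρ j : ℂ) * Complex.exp (-Complex.I * j * ω)‖ ^ 2 * SX ω)
      = fun ω : ℝ => p ω ^ 2 * SX ω := funext fun ω => by rw [habs ω]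
  rw [hfun]
  -- integrability
  have intSX : IntervalIntegrable SX volume (-π) π := by
    apply IntegrableOn.intervalIntegrable
    rwa [Set.uIcc_of_le hππ]
  have hcontF : ContinuousOn (fejerKernel n) (Set.uIcc (-π) π) :=
    (fejerKernel_continuous n).continuousOn
  have int1 : IntervalIntegrable (fun ω => fejerKernel n ω * (p ω ^ 2 * SX ω))
      volume (-π) π := by
    have hg' : ContinuousOn (fun ω => fejerKernel n ω * p ω ^ 2) (Set.uIcc (-π) π) := by
      apply ContinuousOn.mul hcontF
      exact ((hpcont.pow 2).continuousOn)
    have h' := intSX.continuousOn_mul hg'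
    have : (fun ω => fejerKernel n ω * (p ω ^ 2 * SX ω))
        = fun ω => (fejerKernel n ω * p ω ^ 2) * SX ω := funext fun ω => by ring
    rw [this]
    exact h'
  have int2 : IntervalIntegrable (fun ω => fejerKernel n ω * SY ω) volume (-π) π := by
    have hg' : ContinuousOn (fun ω => fejerKernel n ω * g ω) (Set.uIcc (-π) π) := by
      apply ContinuousOn.mul hcontF
      rwa [Set.uIcc_of_le hππ]
    have h' := intSX.continuousOn_mul hg'
    have : (fun ω => fejerKernel n ω * SY ω)
        = fun ω => (fejerKernel n ω * g ω) * SX ω := funext fun ω => by rw [hSY]; ring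
    rw [this]
    exact h'
  have int3 : IntervalIntegrable (fun ω => fejerKernel n ω * SX ω) volume (-π) π :=
    intSX.continuousOn_mul hcontF
  have int4 : IntervalIntegrable
      (fun ω => fejerKernel n ω * (p ω ^ 2 * SX ω) - fejerKernel n ω * SY ω)
      volume (-π) π := int1.sub int2
  -- the integral estimate
  have key : |gmsd (fun ω => p ω ^ 2 * SX ω) n - gmsd SY n| ≤ δ * gmsd SX n := by
    have hdiff : gmsd (fun ω => p ω ^ 2 * SX ω) n - gmsd SY n
        = n * ∫ ω in (-π)..π,
            (fejerKernel n ω * (p ω ^ 2 * SX ω) - fejerKernel n ω * SY ω) := by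
      unfold gmsd
      rw [intervalIntegral.integral_sub int1 int2]
      ring
    rw [hdiff, abs_mul]
    rw [Nat.abs_cast]
    have hstep1 : |∫ ω in (-π)..π,
        (fejerKernel n ω * (p ω ^ 2 * SX ω) - fejerKernel n ω * SY ω)|
        ≤ ∫ ω in (-π)..π,
        |fejerKernel n ω * (p ω ^ 2 * SX ω) - fejerKernel n ω * SY ω| :=
      intervalIntegral.abs_integral_le_integral_abs hππ
    have hstep2 : (∫ ω in (-π)..π,
        |fejerKernel n ω * (p ω ^ 2 * SX ω) - fejerKernel n ω * SY ω|)
        ≤ ∫ ω in (-π)..π, δ * (fejerKernel n ω * SX ω) := by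
      apply intervalIntegral.integral_mono_on hππ int4.abs (int3.const_mul δ)
      intro ω hω
      have heq : fejerKernel n ω * (p ω ^ 2 * SX ω) - fejerKernel n ω * SY ω
          = (fejerKernel n ω * SX ω) * (p ω ^ 2 - g ω) := by rw [hSY]; ring
      rw [heq, abs_mul, abs_of_nonneg (mul_nonneg (fejerKernel_nonneg n ω) (hSXnonneg ω))]
      rw [mul_comm δ _]
      exact mul_le_mul_of_nonneg_left (hest ω hω)
        (mul_nonneg (fejerKernel_nonneg n ω) (hSXnonneg ω))
    have hgmsdSX : (∫ ω in (-π)..π, δ * (fejerKernel n ω * SX ω))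
        = δ * ∫ ω in (-π)..π, fejerKernel n ω * SX ω := by
      rw [intervalIntegral.integral_const_mul]
    unfold gmsd
    calc (n:ℝ) * |∫ ω in (-π)..π,
        (fejerKernel n ω * (p ω ^ 2 * SX ω) - fejerKernel n ω * SY ω)|
        ≤ (n:ℝ) * (δ * ∫ ω in (-π)..π, fejerKernel n ω * SX ω) := by
          apply mul_le_mul_of_nonneg_left _ (Nat.cast_nonneg n)
          rw [← hgmsdSX]
          exact le_trans hstep1 hstep2
      _ = δ * ((n:ℝ) * ∫ ω in (-π)..π, fejerKernel n ω * SX ω) := by ring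
  -- conclude
  have hXle : gmsd SX n ≤ L * gmsd SY n := by
    have := hbound n hn
    rwa [div_le_iff₀ hBpos] at this
  have hfinal : |gmsd (fun ω => p ω ^ 2 * SX ω) n - gmsd SY n| ≤ (ε / 2) * gmsd SY n := by
    calc |gmsd (fun ω => p ω ^ 2 * SX ω) n - gmsd SY n| ≤ δ * gmsd SX n := key
      _ ≤ δ * (L * gmsd SY n) := by
          apply mul_le_mul_of_nonneg_left hXle (le_of_lt hδpos)
      _ = (ε / 2) * gmsd SY n := by
          rw [hδdef]
          field_simp
  rw [div_sub_one (ne_of_gt hBpos), abs_div, abs_of_pos hBpos, div_lt_iff₀ hBpos]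
  calc |gmsd (fun ω => p ω ^ 2 * SX ω) n - gmsd SY n| ≤ (ε / 2) * gmsd SY n := hfinal
    _ < ε * gmsd SY n := by nlinarith
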